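/- arXiv:1609.05107 — 2 statements merged into one kernel-verified Lean document; each statement's English description precedes it below -/
import Mathlib

section
/- Let A, B, D be nonnegative real numbers with A ≤ D, let p > 0 and τ₀ ∈ ℝ, and suppose that A ≤ e^{τ} B + e^{−pτ} D for all τ ≥ τ₀. Then there is a constant C > 0, depending only on p and τ₀ (not on A, B, D), such that A ≤ C B^{κ} D^{1−κ}, where κ = p/(1+p). -/
/-!
Write `κ = p / (1 + p)` and `X = B ^ κ * D ^ (1 - κ)`. The two terms `e^τ B` and
`e^{-pτ} D` balance, both equal to `X`, at `τ = log (D / B) / (1 + p)`. If this `τ` is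
admissible, i.e. `D > e^{(1+p)τ₀} B`, the hypothesis gives `A ≤ 2 X`. Otherwise
`D ≤ e^{(1+p)τ₀} B`, and then `A ≤ D = D ^ κ * D ^ (1 - κ) ≤ e^{pτ₀} X`.
When `B = 0` letting `τ → ∞` forces `A = 0`.
-/

open Real Filter

namespace Real

theorem le_of_le_mul_rpow_mul_rpow {B D c κ : ℝ} (hB : 0 ≤ B) (hD : 0 ≤ D) (hc : 0 ≤ c)
    (hκ : 0 ≤ κ) (hDB : D ≤ c * B) : D ≤ c ^ κ * (B ^ κ * D ^ (1 - κ)) :=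
  calc D = D ^ κ * D ^ (1 - κ) := by rw [← rpow_add' hD (by norm_num), add_sub_cancel, rpow_one]
    _ ≤ (c * B) ^ κ * D ^ (1 - κ) := by gcongr
    _ = c ^ κ * (B ^ κ * D ^ (1 - κ)) := by rw [mul_rpow hc hB, mul_assoc]

section Balance

variable {B D p : ℝ}

theorem exp_log_div_div_mul_eq (hB : 0 < B) (hD : 0 < D) (hp : 1 + p ≠ 0) :
    exp (log (D / B) / (1 + p)) * B = B ^ (p / (1 + p)) * D ^ (1 - p / (1 + p)) := by
  refine log_injOn_pos (Set.mem_Ioi.mpr (by positivity)) (Set.mem_Ioi.mpr (by positivity)) ?_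
  rw [log_mul (by positivity) hB.ne', log_mul (by positivity) (by positivity), log_exp,
    log_rpow hB, log_rpow hD, log_div hD.ne' hB.ne']
  field_simp
  ring

theorem exp_neg_mul_log_div_div_mul_eq (hB : 0 < B) (hD : 0 < D) (hp : 1 + p ≠ 0) :
    exp (-p * (log (D / B) / (1 + p))) * D = B ^ (p / (1 + p)) * D ^ (1 - p / (1 + p)) := by
  refine log_injOn_pos (Set.mem_Ioi.mpr (by positivity)) (Set.mem_Ioi.mpr (by positivity)) ?_
  rw [log_mul (by positivity) hD.ne', log_mul (by positivity) (by positivity), log_exp,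
    log_rpow hB, log_rpow hD, log_div hD.ne' hB.ne']
  field_simp
  ring

end Balance

theorem nonpos_of_forall_le_exp_neg_mul {A D p τ₀ : ℝ} (hp : 0 < p)
    (h : ∀ τ, τ₀ ≤ τ → A ≤ exp (-p * τ) * D) : A ≤ 0 := by
  have hlim : Tendsto (fun τ => exp (-p * τ) * D) atTop (nhds 0) := by
    simpa using (tendsto_exp_atBot.comp
      (tendsto_id.const_mul_atTop_of_neg (neg_lt_zero.mpr hp))).mul_const D
  exact ge_of_tendsto hlim (eventually_atTop.mpr ⟨τ₀, h⟩)

end Real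

/-- Optimization over `τ` of a two-parameter estimate yields a Hölder-type interpolation
inequality (cf. [LeRousseau2012, Lemma 5.2]). -/
theorem stmt_4 (p τ₀ : ℝ) (hp : 0 < p) :
    ∃ C : ℝ, 0 < C ∧
      ∀ A B D : ℝ, 0 ≤ A → 0 ≤ B → 0 ≤ D → A ≤ D →
        (∀ τ : ℝ, τ₀ ≤ τ → A ≤ Real.exp τ * B + Real.exp (-p * τ) * D) →
        A ≤ C * B ^ (p / (1 + p)) * D ^ (1 - p / (1 + p)) := by
  have h1p : 0 < 1 + p := by linarith
  refine ⟨max 2 (exp (p * τ₀)), by positivity, fun A B D hA hB hD hAD h => ?_⟩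
  rw [mul_assoc]
  have hX : 0 ≤ B ^ (p / (1 + p)) * D ^ (1 - p / (1 + p)) := by positivity
  by_cases hDB : D ≤ exp ((1 + p) * τ₀) * B
  · have hc : exp ((1 + p) * τ₀) ^ (p / (1 + p)) = exp (p * τ₀) := by
      rw [← exp_mul]; field_simp
    calc A ≤ D := hAD
      _ ≤ exp (p * τ₀) * (B ^ (p / (1 + p)) * D ^ (1 - p / (1 + p))) := by
        simpa only [hc] using le_of_le_mul_rpow_mul_rpow (κ := p / (1 + p)) hB hD
          (exp_pos _).le (by positivity) hDB
      _ ≤ _ := by gcongr; exact le_max_right _ _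
  rw [not_le] at hDB
  have hD0 : 0 < D := lt_of_le_of_lt (by positivity) hDB
  rcases hB.eq_or_lt with rfl | hB0
  · have hA0 : A ≤ 0 := nonpos_of_forall_le_exp_neg_mul hp fun τ hτ => by simpa using h τ hτ
    exact hA0.trans (by positivity)
  have hτ₀ : τ₀ ≤ log (D / B) / (1 + p) := by
    rw [le_div_iff₀ h1p, mul_comm]
    exact (lt_log_iff_exp_lt (by positivity)).mpr ((lt_div_iff₀ hB0).mpr hDB) |>.le
  calc A ≤ _ := h _ hτ₀
    _ = 2 * (B ^ (p / (1 + p)) * D ^ (1 - p / (1 + p))) := by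
      rw [exp_log_div_div_mul_eq hB0 hD0 h1p.ne', exp_neg_mul_log_div_div_mul_eq hB0 hD0 h1p.ne']
      ring
    _ ≤ _ := by gcongr; exact le_max_left _ _
end

section
/- (Pseudoconvexity of the exponential weight.) Let n ≥ 1, let U ⊆ ℝⁿ be open, let K ⊆ U be compact, and let ρ : U → ℝ be smooth (C^∞) with ‖∇ρ(x)‖ = 1 for all x ∈ K. Then there exists α₀ > 0 such that for every α ≥ α₀ the function φ = e^{αρ} satisfies: for every x ∈ K, every τ > 0 and every ξ ∈ ℝⁿ with ‖ξ‖ = τ‖∇φ(x)‖, one has D²φ(x)(ξ,ξ) + τ² D²φ(x)(∇φ(x), ∇φ(x)) > 0, where D²φ(x) denotes the Hessian bilinear form of φ at x. -/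
open Set

noncomputable section

/-- Euclidean space `ℝⁿ`. -/
abbrev E (n : ℕ) := EuclideanSpace ℝ (Fin n)

/-- Hessian bilinear form `D²φ(x)(v,w)`. -/
def hessian {n : ℕ} (φ : E n → ℝ) (x v w : E n) : ℝ :=
  fderiv ℝ (fun y => fderiv ℝ φ y v) x w

/-! For `φ = e^{αρ}` one has `∇φ = λ ∇ρ` and `D²φ = λ (α dρ ⊗ dρ + D²ρ)` with `λ = α e^{αρ}`.
The term `α dρ(ξ)²` is nonnegative, and along `∇φ` it contributes `α λ³`, since `‖∇ρ‖ = 1`.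
Everything else is bounded by `C λ³ τ²`, where `C` bounds `‖D²ρ‖` on the compact set `K`,
so any `α > 2C` works. -/

open Topology

section

variable {n : ℕ} {ρ : E n → ℝ} {x : E n}

theorem hasFDerivAt_exp_mul (α : ℝ) (hd : DifferentiableAt ℝ ρ x) :
    HasFDerivAt (fun y => Real.exp (α * ρ y)) ((α * Real.exp (α * ρ x)) • fderiv ℝ ρ x) x := by
  simpa [smul_smul, mul_comm] using (hd.hasFDerivAt.const_mul α).exp

theorem gradient_exp_mul (α : ℝ) (hd : DifferentiableAt ℝ ρ x) :
    gradient (fun y => Real.exp (α * ρ y)) x = (α * Real.exp (α * ρ x)) • gradient ρ x := by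
  simp [gradient, (hasFDerivAt_exp_mul α hd).fderiv]

theorem hessian_eq_fderiv_fderiv_apply {φ : E n → ℝ} (hd : DifferentiableAt ℝ (fderiv ℝ φ) x)
    (v w : E n) : hessian φ x v w = fderiv ℝ (fderiv ℝ φ) x w v := by
  simp [hessian, fderiv_clm_apply hd (differentiableAt_const v)]

theorem abs_hessian_le {φ : E n → ℝ} (hd : DifferentiableAt ℝ (fderiv ℝ φ) x) (v w : E n) :
    |hessian φ x v w| ≤ ‖fderiv ℝ (fderiv ℝ φ) x‖ * ‖v‖ * ‖w‖ := by
  rw [hessian_eq_fderiv_fderiv_apply hd, ← Real.norm_eq_abs]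
  calc ‖fderiv ℝ (fderiv ℝ φ) x w v‖ ≤ ‖fderiv ℝ (fderiv ℝ φ) x w‖ * ‖v‖ :=
        ContinuousLinearMap.le_opNorm _ v
    _ ≤ ‖fderiv ℝ (fderiv ℝ φ) x‖ * ‖w‖ * ‖v‖ := by
        gcongr; exact ContinuousLinearMap.le_opNorm _ w
    _ = _ := by ring

theorem hessian_exp_mul (hρ : ContDiffAt ℝ 2 ρ x) (α : ℝ) (v w : E n) :
    hessian (fun y => Real.exp (α * ρ y)) x v w =
      α * Real.exp (α * ρ x) * (α * fderiv ℝ ρ x v * fderiv ℝ ρ x w + hessian ρ x v w) := by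
  have hdiff : ∀ᶠ y in 𝓝 x, DifferentiableAt ℝ ρ y :=
    (hρ.eventually (by simp)).mono fun y hy => hy.differentiableAt (by norm_num)
  have hdρv : DifferentiableAt ℝ (fun y => fderiv ℝ ρ y v) x :=
    ((hρ.fderiv_right (m := 1) le_rfl).differentiableAt one_ne_zero).clm_apply
      (differentiableAt_const v)
  have hfderiv_eq : (fun y => fderiv ℝ (fun z => Real.exp (α * ρ z)) y v) =ᶠ[𝓝 x]
      fun y => α * Real.exp (α * ρ y) * fderiv ℝ ρ y v :=
    hdiff.mono fun y hy => by simp [(hasFDerivAt_exp_mul α hy).fderiv]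
  have hprod : HasFDerivAt (fun y => α * Real.exp (α * ρ y) * fderiv ℝ ρ y v)
      ((α * Real.exp (α * ρ x)) • fderiv ℝ (fun y => fderiv ℝ ρ y v) x +
        fderiv ℝ ρ x v • α • (α * Real.exp (α * ρ x)) • fderiv ℝ ρ x) x :=
    ((hasFDerivAt_exp_mul α hdiff.self_of_nhds).const_mul α).mul hdρv.hasFDerivAt
  rw [hessian, hfderiv_eq.fderiv_eq, hprod.fderiv]
  simp only [hessian, add_apply, smul_apply, smul_eq_mul]
  ring

theorem fderiv_apply_gradient_exp_mul (α : ℝ) (hd : DifferentiableAt ℝ ρ x)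
    (hg : ‖gradient ρ x‖ = 1) :
    fderiv ℝ ρ x (gradient (fun y => Real.exp (α * ρ y)) x) = α * Real.exp (α * ρ x) := by
  rw [gradient_exp_mul α hd, map_smul, ← inner_gradient_left, real_inner_self_eq_norm_sq, hg]
  simp

theorem norm_gradient_exp_mul {α : ℝ} (hα : 0 ≤ α) (hd : DifferentiableAt ℝ ρ x)
    (hg : ‖gradient ρ x‖ = 1) :
    ‖gradient (fun y => Real.exp (α * ρ y)) x‖ = α * Real.exp (α * ρ x) := by
  rw [gradient_exp_mul α hd, norm_smul, hg, mul_one, Real.norm_of_nonneg (by positivity)]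

theorem hessian_exp_mul_add_pos (hρ : ContDiffAt ℝ 2 ρ x) (hg : ‖gradient ρ x‖ = 1) {C α τ : ℝ}
    (hC : ‖fderiv ℝ (fderiv ℝ ρ) x‖ ≤ C) (hα : 2 * C < α) (hτ : 0 < τ) {ξ : E n}
    (hξ : ‖ξ‖ = τ * ‖gradient (fun y => Real.exp (α * ρ y)) x‖) :
    0 < hessian (fun y => Real.exp (α * ρ y)) x ξ ξ +
      τ ^ 2 * hessian (fun y => Real.exp (α * ρ y)) x
        (gradient (fun y => Real.exp (α * ρ y)) x) (gradient (fun y => Real.exp (α * ρ y)) x) := by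
  set φ := fun y => Real.exp (α * ρ y)
  have hd : DifferentiableAt ℝ ρ x := hρ.differentiableAt (by norm_num)
  have hdd : DifferentiableAt ℝ (fderiv ℝ ρ) x :=
    (hρ.fderiv_right (m := 1) le_rfl).differentiableAt one_ne_zero
  have hC0 : 0 ≤ C := (norm_nonneg (fderiv ℝ (fderiv ℝ ρ) x)).trans hC
  have hα0 : 0 < α := by linarith
  set l := α * Real.exp (α * ρ x)
  have hl : 0 < l := by positivity
  have hφg : ‖gradient φ x‖ = l := norm_gradient_exp_mul hα0.le hd hg
  have hbound : ∀ v, -(C * ‖v‖ ^ 2) ≤ hessian ρ x v v := fun v => by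
    have h := (abs_hessian_le hdd v v).trans
      (by gcongr : ‖fderiv ℝ (fderiv ℝ ρ) x‖ * ‖v‖ * ‖v‖ ≤ C * ‖v‖ * ‖v‖)
    nlinarith [neg_abs_le (hessian ρ x v v)]
  have hξξ : -(C * l ^ 3 * τ ^ 2) ≤ hessian φ x ξ ξ := by
    have := hbound ξ
    rw [hξ, hφg] at this
    rw [hessian_exp_mul hρ]
    nlinarith [sq_nonneg (fderiv ℝ ρ x ξ), mul_pos hα0 hl]
  have hgg : (α - C) * l ^ 3 ≤ hessian φ x (gradient φ x) (gradient φ x) := by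
    have := hbound (gradient φ x)
    rw [hφg] at this
    rw [hessian_exp_mul hρ, fderiv_apply_gradient_exp_mul α hd hg]
    nlinarith
  have : 0 < (α - 2 * C) * l ^ 3 * τ ^ 2 := by
    have : 0 < α - 2 * C := by linarith
    positivity
  nlinarith [pow_pos hτ 2]

end

theorem stmt_6_general (n : ℕ) (U : Set (E n)) (hU : IsOpen U)
    (K : Set (E n)) (hK : IsCompact K) (hKU : K ⊆ U)
    (ρ : E n → ℝ) (hρ : ContDiffOn ℝ (⊤ : ℕ∞) ρ U)
    (hgrad : ∀ x ∈ K, ‖gradient ρ x‖ = 1) :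
    ∃ α₀ : ℝ, 0 < α₀ ∧ ∀ α : ℝ, α₀ ≤ α →
      ∀ x ∈ K, ∀ τ : ℝ, 0 < τ → ∀ ξ : E n,
        ‖ξ‖ = τ * ‖gradient (fun y => Real.exp (α * ρ y)) x‖ →
        0 < hessian (fun y => Real.exp (α * ρ y)) x ξ ξ +
            τ^2 * hessian (fun y => Real.exp (α * ρ y)) x
              (gradient (fun y => Real.exp (α * ρ y)) x)
              (gradient (fun y => Real.exp (α * ρ y)) x) := by
  have hD2 : ContinuousOn (fun y => fderiv ℝ (fderiv ℝ ρ) y) U :=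
    (hρ.fderiv_of_isOpen (m := 1) hU (WithTop.coe_le_coe.mpr le_top)).continuousOn_fderiv_of_isOpen
      hU le_rfl
  obtain ⟨C, hC⟩ := hK.exists_bound_of_continuousOn (f := fun y => fderiv ℝ (fderiv ℝ ρ) y)
    (hD2.mono hKU)
  refine ⟨2 * max C 0 + 1, by positivity, fun α hα x hx τ hτ ξ hξ => ?_⟩
  have hρx : ContDiffAt ℝ 2 ρ x :=
    (hρ.contDiffAt (hU.mem_nhds (hKU hx))).of_le (WithTop.coe_le_coe.mpr le_top)
  exact hessian_exp_mul_add_pos hρx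
    (hgrad x hx) ((hC x hx).trans (le_max_left C 0)) (by linarith) hτ hξ

/-- Pseudoconvexity of the exponential weight `φ = e^{αρ}` for large `α`,
on a compact set where `‖∇ρ‖ = 1`. -/
theorem stmt_6 (n : ℕ) (hn : 1 ≤ n) (U : Set (E n)) (hU : IsOpen U)
    (K : Set (E n)) (hK : IsCompact K) (hKU : K ⊆ U)
    (ρ : E n → ℝ) (hρ : ContDiffOn ℝ (⊤ : ℕ∞) ρ U)
    (hgrad : ∀ x ∈ K, ‖gradient ρ x‖ = 1) :
    ∃ α₀ : ℝ, 0 < α₀ ∧ ∀ α : ℝ, α₀ ≤ α →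
      ∀ x ∈ K, ∀ τ : ℝ, 0 < τ → ∀ ξ : E n,
        ‖ξ‖ = τ * ‖gradient (fun y => Real.exp (α * ρ y)) x‖ →
        0 < hessian (fun y => Real.exp (α * ρ y)) x ξ ξ +
            τ^2 * hessian (fun y => Real.exp (α * ρ y)) x
              (gradient (fun y => Real.exp (α * ρ y)) x)
              (gradient (fun y => Real.exp (α * ρ y)) x) :=
  stmt_6_general n U hU K hK hKU ρ hρ hgrad
end
end
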